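/- arXiv:2210.05707 — 3 statements merged into one kernel-verified Lean document; each statement's English description precedes it below -/
import Mathlib

section
/- For any matrix A ∈ ℂ^{K×K} and any binary matrix M ∈ {0,1}^{K×K}, there exists a permutation ρ of {1, …, K} such that |det((P_ρ A) ⊙ M)| ≥ |G_M| · |det(A)| / K!. -/
/-!
Expanding both determinants gives `∑ ρ, sign ρ * det ((P_ρ A) ⊙ M) = perm M * det A`, and for a
0/1 matrix `M` the permanent counts `G_M`. By the triangle inequality the `K!` numbers
`|det ((P_ρ A) ⊙ M)|` add up to at least `|G_M| |det A|`, so one of them is at least their mean.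
-/

noncomputable section

/-- The permutation matrix `P_ρ` with `(P_ρ)_{k,ℓ} = 1` iff `ℓ = ρ(k)`, so that the
`k`-th row of `P_ρ * A` is the `ρ(k)`-th row of `A`. -/
def permMat {K : ℕ} (ρ : Equiv.Perm (Fin K)) : Matrix (Fin K) (Fin K) ℂ :=
  Matrix.of fun k l => if l = ρ k then 1 else 0

open Equiv Finset Matrix
open scoped BigOperators

theorem permMat_mul {K : ℕ} (ρ : Perm (Fin K)) (A : Matrix (Fin K) (Fin K) ℂ) :
    permMat ρ * A = A.submatrix ρ id := by
  ext k l
  simp [mul_apply, permMat, ite_mul]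

namespace Matrix

variable {n R : Type*} [Fintype n] [DecidableEq n]

theorem permanent_eq_card_of_mem_zero_one [CommSemiring R] [DecidableEq R] {M : Matrix n n R}
    (hM : ∀ i j, M i j = 0 ∨ M i j = 1) :
    M.permanent = #{σ : Perm n | ∀ i, M i (σ i) = 1} := by
  have hboole (σ : Perm n) (i : n) : M i (σ i) = if M i (σ i) = 1 then 1 else 0 := by
    rcases hM i (σ i) with h | h <;> simp [h]
  rw [← permanent_transpose, permanent]
  simp only [transpose_apply]
  rw [sum_congr rfl fun σ _ => prod_congr rfl fun i _ => hboole σ i]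
  simp only [Fintype.prod_boole, sum_boole]

theorem sum_sign_mul_det_hadamard_submatrix [CommRing R] (A M : Matrix n n R) :
    ∑ ρ : Perm n, (Perm.sign ρ : R) * (A.submatrix ρ id ⊙ M).det = M.permanent * A.det := by
  have hdet (ρ : Perm n) : (A.submatrix ρ id ⊙ M).det
      = ∑ σ : Perm n, (Perm.sign σ : R) * ((∏ i, A (ρ i) (σ i)) * ∏ i, M i (σ i)) := by
    rw [← det_transpose, det_apply']
    simp only [transpose_apply, hadamard_apply, submatrix_apply, id, prod_mul_distrib]
  have hrows (σ : Perm n) : ∑ ρ : Perm n, (Perm.sign ρ : R) * ∏ i, A (ρ i) (σ i)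
      = Perm.sign σ * A.det := by
    rw [← det_permute', det_apply']
    rfl
  calc _ = ∑ σ : Perm n, (Perm.sign σ : R) * (∏ i, M i (σ i))
          * ∑ ρ : Perm n, (Perm.sign ρ : R) * ∏ i, A (ρ i) (σ i) := by
        simp only [hdet, mul_sum]
        rw [sum_comm]
        exact sum_congr rfl fun σ _ => sum_congr rfl fun ρ _ => by ring
    _ = ∑ σ : Perm n, (∏ i, M i (σ i)) * A.det := by
        refine sum_congr rfl fun σ _ => ?_
        have hsign : (Perm.sign σ : R) * Perm.sign σ = 1 := by
          rw [← Int.cast_mul, ← Units.val_mul, Int.units_mul_self, Units.val_one, Int.cast_one]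
        rw [hrows]
        linear_combination (∏ i, M i (σ i)) * A.det * hsign
    _ = M.permanent * A.det := by
        rw [← sum_mul, ← permanent_transpose, permanent]
        rfl

end Matrix

/-- For any `A ∈ ℂ^{K×K}` and any binary matrix `M ∈ {0,1}^{K×K}`, there
is a permutation `ρ` with `|det((P_ρ A) ⊙ M)| ≥ |G_M| · |det A| / K!`, where `G_M` is the
set of permutations `σ` with `M_{k,σ(k)} = 1` for all `k`. -/
theorem stmt_2 (K : ℕ) (A M : Matrix (Fin K) (Fin K) ℂ)
    (hM : ∀ k l, M k l = 0 ∨ M k l = 1) :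
    ∃ ρ : Equiv.Perm (Fin K),
      ((Finset.univ.filter fun σ : Equiv.Perm (Fin K) => ∀ k, M k (σ k) = 1).card : ℝ)
          * ‖A.det‖ / (Nat.factorial K : ℝ)
        ≤ ‖(Matrix.hadamard (permMat ρ * A) M).det‖ := by
  have hsum : (#{σ : Perm (Fin K) | ∀ k, M k (σ k) = 1} : ℂ) * A.det
      = ∑ ρ : Perm (Fin K), (Perm.sign ρ : ℂ) * ((permMat ρ * A) ⊙ M).det := by
    simp_rw [permMat_mul, sum_sign_mul_det_hadamard_submatrix, permanent_eq_card_of_mem_zero_one hM]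
    congr
  have hle : (#{σ : Perm (Fin K) | ∀ k, M k (σ k) = 1} : ℝ) * ‖A.det‖
      ≤ ∑ ρ : Perm (Fin K), ‖((permMat ρ * A) ⊙ M).det‖ := by
    calc _ = ‖∑ ρ : Perm (Fin K), (Perm.sign ρ : ℂ) * ((permMat ρ * A) ⊙ M).det‖ := by
          rw [← hsum, norm_mul, Complex.norm_natCast]
      _ ≤ _ := (norm_sum_le _ _).trans_eq <| Fintype.sum_congr _ _ fun ρ => by
          rcases Int.units_eq_one_or (Perm.sign ρ) with h | h <;> simp [h]
  have hmean : (#{σ : Perm (Fin K) | ∀ k, M k (σ k) = 1} : ℝ) * ‖A.det‖ / K.factorial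
      ≤ 𝔼 ρ : Perm (Fin K), ‖((permMat ρ * A) ⊙ M).det‖ := by
    rw [Fintype.expect_eq_sum_div_card, Fintype.card_perm, Fintype.card_fin]
    gcongr
  obtain ⟨ρ, -, hρ⟩ := exists_le_of_le_expect univ_nonempty hmean
  exact ⟨ρ, hρ⟩
end
end

section
/- Let I_1, I_2 be nonempty intervals partitioning [0,1), and let Λ_1, Λ_2 be disjoint subsets of ℤ with Λ_1 ∪ Λ_2 = ℤ such that for each k = 1,2 the system E(I_k, Λ_k) is a Riesz basis for L²(I_k). For each k = 1,2 let 𝓛_k ⊆ {1,2} with k ∈ 𝓛_k and set S_k = ⋃_{n∈𝓛_k} I_n. Then the family E(S_1, Λ_1) ∪ E(S_2, Λ_2), indexed by pairs (k, λ) with λ ∈ Λ_k, is a Riesz basis for L²[0,1). -/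
open MeasureTheory Complex Real Set
open scoped Classical

noncomputable section

/-- Lebesgue measure restricted to `[0,1)`. -/
def μ01 : MeasureTheory.Measure ℝ := MeasureTheory.volume.restrict (Set.Ico (0:ℝ) 1)

/-- The Hilbert space `L²[0,1)` of complex square-integrable functions on `[0,1)`. -/
abbrev L2 : Type := MeasureTheory.Lp ℂ 2 μ01

/-- A function on ℝ as an element of `L²[0,1)` (junk value `0` if not in `L²`). -/
def toL2 (f : ℝ → ℂ) : L2 :=
  if h : MeasureTheory.MemLp f 2 μ01 then h.toLp f else 0

/-- The function `x ↦ e^{2πiλx} · χ_S(x)` as an element of `L²[0,1)`. -/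
def expChar (S : Set ℝ) (lam : ℝ) : L2 :=
  toL2 (S.indicator fun x => Complex.exp (2 * Real.pi * lam * x * Complex.I))

/-- `L²(S)` viewed as the subset of `L²[0,1)` of elements vanishing a.e. outside `S`. -/
def L2on (S : Set ℝ) : Set L2 := {g : L2 | ∀ᵐ x ∂μ01, x ∉ S → g x = 0}

/-- A family is a Riesz sequence: there are `0 < A ≤ B` giving a two-sided ℓ²-norm
equivalence on (finite) linear combinations. -/
def IsRieszSequence {ι : Type*} (f : ι → L2) : Prop :=
  ∃ A B : ℝ, 0 < A ∧ A ≤ B ∧ ∀ c : ι →₀ ℂ,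
    A * ∑ i ∈ c.support, ‖c i‖ ^ 2 ≤ ‖∑ i ∈ c.support, c i • f i‖ ^ 2 ∧
    ‖∑ i ∈ c.support, c i • f i‖ ^ 2 ≤ B * ∑ i ∈ c.support, ‖c i‖ ^ 2

/-- A family is a Riesz basis for the subspace of `L²[0,1)` given by the subset `V`:
it is a Riesz sequence whose closed linear span is `V`. -/
def IsRieszBasis {ι : Type*} (f : ι → L2) (V : Set L2) : Prop :=
  IsRieszSequence f ∧ closure (↑(Submodule.span ℂ (Set.range f)) : Set L2) = V

/-!
Write `S_k = I_k ∪ R_k` with `R_k ⊆ I_o`, where `o` is the other index. If both `S_k` equal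
`[0,1)`, the family is the Fourier basis `e^{2πinx}` (`n ∈ ℤ`) reindexed along the bijection
`(k, λ) ↦ λ`. Otherwise `S_j = I_j` for some `j`, and with respect to
`L²[0,1) = L²(I_j) ⊕ L²(I_o)` the synthesis operator is block triangular: the `j`-block lies in
`L²(I_j)`, while the `o`-block is the Riesz basis `E(I_o, Λ_o)` of `L²(I_o)` plus the vectors
`χ_{R_o} e_λ ∈ L²(I_j)`, whose combinations have norm at most the `ℓ²`-norm of the coefficients
(they are restrictions of orthonormal exponentials). Projecting onto `L²(I_o)` controls the
`o`-coefficients, and then the `j`-block controls the `j`-coefficients. Completeness follows in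
the same order: first `L²(I_j)`, then `L²(I_o)`, lie in the closed span.
-/

lemma Finsupp.sum_support_sigma {κ : Type*} [Fintype κ] {α : κ → Type*} {M N : Type*} [Zero M]
    [AddCommMonoid N] (c : (Σ k, α k) →₀ M) (g : (Σ k, α k) → M → N) :
    ∑ p ∈ c.support, g p (c p) = ∑ k, ∑ i ∈ (c.split k).support, g ⟨k, i⟩ (c.split k i) := by
  rw [c.sigma_support, Finset.sum_sigma]
  refine Finset.sum_subset (Finset.subset_univ _) fun k _ hk => ?_
  rw [Finsupp.mem_splitSupport_iff_nonzero, not_not] at hk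
  simp [hk]

lemma Fin.sum_univ_two_of_ne {M : Type*} [AddCommMonoid M] {j o : Fin 2} (hjo : j ≠ o)
    (F : Fin 2 → M) : ∑ k, F k = F j + F o := by
  fin_cases j <;> fin_cases o <;> simp_all [Fin.sum_univ_two, add_comm]

lemma norm_sq_le_two_mul_norm_add_sq_add {E : Type*} [SeminormedAddCommGroup E] (x y : E) :
    ‖x‖ ^ 2 ≤ 2 * ‖x + y‖ ^ 2 + 2 * ‖y‖ ^ 2 := by
  have h : ‖x‖ ≤ ‖x + y‖ + ‖y‖ := by simpa using norm_sub_le (x + y) y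
  nlinarith [norm_nonneg x, sq_nonneg (‖x + y‖ - ‖y‖)]

section RieszBounds

variable {E : Type*} [NormedAddCommGroup E] [InnerProductSpace ℂ E] {ι : Type*}

def HasRieszUpperBound (f : ι → E) (B : ℝ) : Prop :=
  ∀ c : ι →₀ ℂ, ‖∑ i ∈ c.support, c i • f i‖ ^ 2 ≤ B * ∑ i ∈ c.support, ‖c i‖ ^ 2

def HasRieszLowerBound (f : ι → E) (A : ℝ) : Prop :=
  ∀ c : ι →₀ ℂ, A * ∑ i ∈ c.support, ‖c i‖ ^ 2 ≤ ‖∑ i ∈ c.support, c i • f i‖ ^ 2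

lemma Orthonormal.norm_sum_smul_sq {f : ι → E} (hf : Orthonormal ℂ f) (s : Finset ι)
    (c : ι → ℂ) : ‖∑ i ∈ s, c i • f i‖ ^ 2 = ∑ i ∈ s, ‖c i‖ ^ 2 := by
  simpa using hf.orthogonalFamily.norm_sum c s

lemma HasRieszUpperBound.add {f g : ι → E} {B B' : ℝ} (hf : HasRieszUpperBound f B)
    (hg : HasRieszUpperBound g B') : HasRieszUpperBound (f + g) (2 * (B + B')) := fun c => by
  have hsum : ∑ i ∈ c.support, c i • (f + g) i =
      ∑ i ∈ c.support, c i • f i + ∑ i ∈ c.support, c i • g i := by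
    simp only [Pi.add_apply, smul_add, Finset.sum_add_distrib]
  rw [hsum]
  have := norm_add_le (∑ i ∈ c.support, c i • f i) (∑ i ∈ c.support, c i • g i)
  nlinarith [hf c, hg c, norm_nonneg (∑ i ∈ c.support, c i • f i + ∑ i ∈ c.support, c i • g i),
    sq_nonneg (‖∑ i ∈ c.support, c i • f i‖ - ‖∑ i ∈ c.support, c i • g i‖)]

lemma HasRieszUpperBound.sigma {κ : Type*} [Fintype κ] {α : κ → Type*} {f : (Σ k, α k) → E}
    {B : κ → ℝ} (hB : ∀ k, 0 ≤ B k) (hf : ∀ k, HasRieszUpperBound (fun i => f ⟨k, i⟩) (B k)) :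
    HasRieszUpperBound f (∑ k, B k) := fun c => by
  rw [Finsupp.sum_support_sigma c fun p z => z • f p,
    Finsupp.sum_support_sigma c fun _ z => ‖z‖ ^ 2]
  set T := fun k => ∑ i ∈ (c.split k).support, c.split k i • f ⟨k, i⟩
  set m := fun k => ∑ i ∈ (c.split k).support, ‖c.split k i‖ ^ 2
  have hm : ∀ k, 0 ≤ m k := fun k => Finset.sum_nonneg fun _ _ => sq_nonneg _
  have hT : ∀ k, ‖T k‖ ≤ √(B k) * √(m k) := fun k => by
    rw [← Real.sqrt_mul (hB k), Real.le_sqrt (norm_nonneg _) (mul_nonneg (hB k) (hm k))]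
    exact hf k (c.split k)
  calc ‖∑ k, T k‖ ^ 2 ≤ (∑ k, √(B k) * √(m k)) ^ 2 := by
        gcongr
        exact (norm_sum_le _ _).trans (Finset.sum_le_sum fun k _ => hT k)
    _ ≤ (∑ k, √(B k) ^ 2) * ∑ k, √(m k) ^ 2 := Finset.sum_mul_sq_le_sq_mul_sq _ _ _
    _ = (∑ k, B k) * ∑ k, m k := by simp only [Real.sq_sqrt, hB, hm]

lemma HasRieszLowerBound.sigma_of_triangular {α : Fin 2 → Type*} {f : (Σ k, α k) → E}
    {j o : Fin 2} (hjo : j ≠ o) {H H' : Submodule ℂ E} (hHH' : H ⟂ H') {A A' : ℝ}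
    (hA : 0 < A) (hA' : 0 < A') (hfj : ∀ i, f ⟨j, i⟩ ∈ H)
    (hj : HasRieszLowerBound (fun i => f ⟨j, i⟩) A) {u w : α o → E}
    (hfo : ∀ i, f ⟨o, i⟩ = u i + w i) (hu : ∀ i, u i ∈ H') (hw : ∀ i, w i ∈ H)
    (hu' : HasRieszLowerBound u A') (hw' : HasRieszUpperBound w 1) :
    HasRieszLowerBound f (1 / A' + 2 * (1 + 1 / A') / A)⁻¹ := fun c => by
  rw [Finsupp.sum_support_sigma c fun p z => z • f p,
    Finsupp.sum_support_sigma c fun _ z => ‖z‖ ^ 2, Fin.sum_univ_two_of_ne hjo,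
    Fin.sum_univ_two_of_ne hjo]
  set T := ∑ i ∈ (c.split j).support, c.split j i • f ⟨j, i⟩
  set U := ∑ i ∈ (c.split o).support, c.split o i • u i
  set W := ∑ i ∈ (c.split o).support, c.split o i • w i
  set mj := ∑ i ∈ (c.split j).support, ‖c.split j i‖ ^ 2
  set mo := ∑ i ∈ (c.split o).support, ‖c.split o i‖ ^ 2
  have hTo : ∑ i ∈ (c.split o).support, c.split o i • f ⟨o, i⟩ = U + W := by
    simp only [U, W, hfo, smul_add, Finset.sum_add_distrib]
  have hT : T ∈ H := H.sum_mem fun i _ => H.smul_mem _ (hfj i)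
  have hU : U ∈ H' := H'.sum_mem fun i _ => H'.smul_mem _ (hu i)
  have hW : W ∈ H := H.sum_mem fun i _ => H.smul_mem _ (hw i)
  have hpyth : ‖T + (U + W)‖ ^ 2 = ‖U‖ ^ 2 + ‖T + W‖ ^ 2 := by
    rw [show T + (U + W) = U + (T + W) by abel]
    simpa only [sq] using norm_add_sq_eq_norm_sq_add_norm_sq_of_inner_eq_zero _ _
      (hHH'.symm.inner_eq hU (H.add_mem hT hW))
  rw [hTo]
  set x := ‖T + (U + W)‖ ^ 2
  have hmo : mo ≤ x / A' := by
    rw [le_div_iff₀ hA']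
    nlinarith [hu' (c.split o), sq_nonneg ‖T + W‖]
  have hmj : mj ≤ (2 * x + 2 * mo) / A := by
    rw [le_div_iff₀ hA]
    nlinarith [hj (c.split j), hw' (c.split o), norm_sq_le_two_mul_norm_add_sq_add T W,
      sq_nonneg ‖U‖]
  have hK : 0 < 1 / A' + 2 * (1 + 1 / A') / A := by positivity
  rw [inv_mul_le_iff₀ hK]
  calc mj + mo ≤ (2 * x + 2 * mo) / A + x / A' := add_le_add hmj hmo
    _ ≤ (2 * x + 2 * (x / A')) / A + x / A' := by gcongr
    _ = (1 / A' + 2 * (1 + 1 / A') / A) * x := by ring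

end RieszBounds

lemma Submodule.topologicalClosure_span_sigma_eq_top_of_triangular {E : Type*} [AddCommGroup E]
    [Module ℂ E] [TopologicalSpace E] [IsTopologicalAddGroup E] [ContinuousConstSMul ℂ E]
    {α : Fin 2 → Type*} {f : (Σ k, α k) → E} {j o : Fin 2} {H H' : Submodule ℂ E}
    (hHH' : H ⊔ H' = ⊤) (hj : (span ℂ (range fun i => f ⟨j, i⟩)).topologicalClosure = H)
    {u w : α o → E} (hfo : ∀ i, f ⟨o, i⟩ = u i + w i)
    (ho : (span ℂ (range u)).topologicalClosure = H') (hw : ∀ i, w i ∈ H) :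
    (span ℂ (range f)).topologicalClosure = ⊤ := by
  set M := (span ℂ (range f)).topologicalClosure
  have hf : ∀ p, f p ∈ M := fun p => le_topologicalClosure _ (subset_span ⟨p, rfl⟩)
  have hHM : H ≤ M := hj ▸ topologicalClosure_minimal _
    (span_le.mpr (range_subset_iff.mpr fun i => hf _)) (isClosed_topologicalClosure _)
  have hH'M : H' ≤ M := ho ▸ topologicalClosure_minimal _
    (span_le.mpr (range_subset_iff.mpr fun i => by
      simpa [hfo] using M.sub_mem (hf ⟨o, i⟩) (hHM (hw i))))
    (isClosed_topologicalClosure _)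
  exact top_le_iff.mp (hHH' ▸ sup_le hHM hH'M)

lemma IsRieszSequence.exists_bounds {ι : Type*} {f : ι → L2} (hf : IsRieszSequence f) :
    ∃ A B, 0 < A ∧ 0 < B ∧ HasRieszLowerBound f A ∧ HasRieszUpperBound f B :=
  let ⟨A, B, hA, hAB, h⟩ := hf
  ⟨A, B, hA, hA.trans_le hAB, fun c => (h c).1, fun c => (h c).2⟩

lemma IsRieszSequence.of_bounds {ι : Type*} {f : ι → L2} {A B : ℝ} (hA : 0 < A)
    (hl : HasRieszLowerBound f A) (hu : HasRieszUpperBound f B) : IsRieszSequence f := by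
  refine ⟨A, max A B, hA, le_max_left _ _, fun c => ⟨hl c, (hu c).trans ?_⟩⟩
  exact mul_le_mul_of_nonneg_right (le_max_right A B) (Finset.sum_nonneg fun _ _ => sq_nonneg _)

lemma HilbertBasis.isRieszBasis_comp {ι ι' : Type*} (b : HilbertBasis ι ℂ L2) {ψ : ι' → ι}
    (hψ : Function.Bijective ψ) : IsRieszBasis (b ∘ ψ) univ := by
  have hnorm := (b.orthonormal.comp ψ hψ.1).norm_sum_smul_sq
  refine ⟨.of_bounds one_pos (B := 1) (fun c => ?_) (fun c => ?_), ?_⟩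
  · exact (one_mul _).trans_le (hnorm _ _).ge
  · exact (hnorm _ _).trans_le (one_mul _).ge
  · rw [← Submodule.topologicalClosure_coe, hψ.2.range_comp, b.dense_span, Submodule.top_coe]

instance : IsFiniteMeasure μ01 := by
  rw [μ01]; infer_instance

lemma memLp_indicator_exp {S : Set ℝ} (hS : MeasurableSet S) (lam : ℝ) :
    MemLp (S.indicator fun x => Complex.exp (2 * π * lam * x * I)) 2 μ01 := by
  refine MemLp.of_bound ((by fun_prop : Continuous fun x : ℝ => Complex.exp (2 * π * lam * x * I))
    |>.aestronglyMeasurable.indicator hS) 1 (Filter.Eventually.of_forall fun x => ?_)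
  refine (norm_indicator_le_norm_self _ x).trans_eq ?_
  simp [Complex.norm_exp]

lemma expChar_ae_eq {S : Set ℝ} (hS : MeasurableSet S) (lam : ℝ) :
    expChar S lam =ᵐ[μ01] S.indicator fun x => Complex.exp (2 * π * lam * x * I) := by
  rw [expChar, toL2, dif_pos (memLp_indicator_exp hS lam)]
  exact MemLp.coeFn_toLp _

def L2onSubmodule (S : Set ℝ) : Submodule ℂ L2 where
  carrier := L2on S
  zero_mem' := by
    filter_upwards [Lp.coeFn_zero ℂ 2 μ01] with x hx _ using hx
  add_mem' {f g} hf hg := by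
    show f + g ∈ L2on S
    filter_upwards [hf, hg, Lp.coeFn_add f g] with x hfx hgx hx hxS
    rw [hx, Pi.add_apply, hfx hxS, hgx hxS, add_zero]
  smul_mem' c f hf := by
    show c • f ∈ L2on S
    filter_upwards [hf, Lp.coeFn_smul c f] with x hfx hx hxS
    rw [hx, Pi.smul_apply, hfx hxS, smul_zero]

lemma mem_L2onSubmodule {S : Set ℝ} {f : L2} :
    f ∈ L2onSubmodule S ↔ ∀ᵐ x ∂μ01, x ∉ S → f x = 0 :=
  Iff.rfl

lemma L2onSubmodule_isOrtho {S T : Set ℝ} (hST : Disjoint S T) :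
    L2onSubmodule S ⟂ L2onSubmodule T := by
  refine Submodule.isOrtho_iff_inner_eq.mpr fun f hf g hg => ?_
  rw [L2.inner_def, ← integral_zero ℝ ℂ]
  refine integral_congr_ae ?_
  filter_upwards [hf, hg] with x hfx hgx
  by_cases hxS : x ∈ S
  · simp [hgx (hST.notMem_of_mem_left hxS)]
  · simp [hfx hxS]

lemma L2onSubmodule_sup_eq_top {S T : Set ℝ} (hS : MeasurableSet S) (hT : MeasurableSet T)
    (hST : Disjoint S T) (hcover : Ico 0 1 ⊆ S ∪ T) : L2onSubmodule S ⊔ L2onSubmodule T = ⊤ := by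
  refine Submodule.eq_top_iff'.mpr fun f => Submodule.mem_sup.mpr ?_
  have hfS := (Lp.memLp f).indicator hS
  have hfT := (Lp.memLp f).indicator hT
  refine ⟨hfS.toLp _, ?_, hfT.toLp _, ?_, Lp.ext ?_⟩
  · filter_upwards [hfS.coeFn_toLp] with x hx hxS
    rw [hx, indicator_of_notMem hxS]
  · filter_upwards [hfT.coeFn_toLp] with x hx hxT
    rw [hx, indicator_of_notMem hxT]
  · filter_upwards [hfS.coeFn_toLp, hfT.coeFn_toLp, Lp.coeFn_add (hfS.toLp _) (hfT.toLp _),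
      ae_restrict_mem (μ := volume) measurableSet_Ico] with x hxS hxT hx hxI
    rw [hx, Pi.add_apply, hxS, hxT]
    exact (congrFun (indicator_union_of_disjoint hST _) x).symm.trans
      (indicator_of_mem (hcover hxI) _)

lemma L2onSubmodule_mono {S T : Set ℝ} (hST : S ⊆ T) : L2onSubmodule S ≤ L2onSubmodule T :=
  fun _ hf => Filter.Eventually.mono (mem_L2onSubmodule.mp hf) fun _ hx hxT =>
    hx fun hxS => hxT (hST hxS)

lemma expChar_mem_L2onSubmodule {S : Set ℝ} (hS : MeasurableSet S) (lam : ℝ) :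
    expChar S lam ∈ L2onSubmodule S := by
  filter_upwards [expChar_ae_eq hS lam] with x hx hxS
  rw [hx, indicator_of_notMem hxS]

lemma expChar_union {S T : Set ℝ} (hS : MeasurableSet S) (hT : MeasurableSet T)
    (hST : Disjoint S T) (lam : ℝ) : expChar (S ∪ T) lam = expChar S lam + expChar T lam := by
  refine Lp.ext ?_
  filter_upwards [expChar_ae_eq (hS.union hT) lam, expChar_ae_eq hS lam, expChar_ae_eq hT lam,
    Lp.coeFn_add (expChar S lam) (expChar T lam)] with x h h₁ h₂ h₃
  rw [h, h₃, Pi.add_apply, h₁, h₂, indicator_union_of_disjoint hST]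

lemma IsRieszBasis.topologicalClosure_span_eq {ι : Type*} {f : ι → L2} {S : Set ℝ}
    (hf : IsRieszBasis f (L2on S)) :
    (Submodule.span ℂ (range f)).topologicalClosure = L2onSubmodule S :=
  SetLike.coe_injective ((Submodule.topologicalClosure_coe _).trans hf.2)

instance : Fact ((0 : ℝ) < 1) := ⟨one_pos⟩

lemma μ01_eq_restrict_Ioc : μ01 = volume.restrict (Ioc 0 1) :=
  Measure.restrict_congr_set Ico_ae_eq_Ioc

lemma haarAddCircle_one : (AddCircle.haarAddCircle : Measure (AddCircle (1 : ℝ))) = volume := by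
  simp [AddCircle.volume_eq_smul_haarAddCircle]

lemma measurePreserving_addCircle_mk :
    MeasurePreserving ((↑) : ℝ → AddCircle (1 : ℝ)) μ01 AddCircle.haarAddCircle := by
  rw [μ01_eq_restrict_Ioc, haarAddCircle_one]
  simpa using AddCircle.measurePreserving_mk (1 : ℝ) 0

lemma measurePreserving_equivIoc_val :
    MeasurePreserving (fun x : AddCircle (1 : ℝ) => (AddCircle.equivIoc 1 0 x : ℝ))
      AddCircle.haarAddCircle μ01 := by
  rw [μ01_eq_restrict_Ioc, haarAddCircle_one]
  have := (measurePreserving_subtype_coe measurableSet_Ioc).comp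
    (AddCircle.measurePreserving_equivIoc (T := 1) (a := 0))
  convert this using 2 <;> first | rfl | simp

def addCircleL2Equiv : Lp ℂ 2 (AddCircle.haarAddCircle (T := 1)) ≃ₗᵢ[ℂ] L2 :=
  LinearIsometryEquiv.ofSurjective (Lp.compMeasurePreservingₗᵢ ℂ _ measurePreserving_addCircle_mk)
    fun f => by
      set g := Lp.compMeasurePreserving _ measurePreserving_equivIoc_val f
      refine ⟨g, Lp.ext ?_⟩
      have hIoc : ∀ᵐ x ∂μ01, x ∈ Ioc (0 : ℝ) 1 := by
        rw [μ01_eq_restrict_Ioc]; exact ae_restrict_mem measurableSet_Ioc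
      filter_upwards [Lp.coeFn_compMeasurePreserving g measurePreserving_addCircle_mk,
        measurePreserving_addCircle_mk.quasiMeasurePreserving.ae_eq_comp
          (Lp.coeFn_compMeasurePreserving f measurePreserving_equivIoc_val), hIoc] with x h₁ h₂ h₃
      refine h₁.trans (h₂.trans ?_)
      simp only [Function.comp_apply]
      rw [AddCircle.equivIoc_coe_of_mem (by simpa using h₃)]

def fourierBasisL2 : HilbertBasis ℤ ℂ L2 :=
  ⟨addCircleL2Equiv.symm.trans fourierBasis.repr⟩

lemma fourierBasisL2_apply (n : ℤ) : fourierBasisL2 n = expChar (Ico 0 1) n := by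
  rw [← fourierBasisL2.repr_symm_single]
  change addCircleL2Equiv (fourierBasis.repr.symm (lp.single 2 n 1)) = _
  rw [fourierBasis.repr_symm_single, coe_fourierBasis]
  refine Lp.ext ?_
  filter_upwards [Lp.coeFn_compMeasurePreserving (fourierLp 2 n) measurePreserving_addCircle_mk,
    measurePreserving_addCircle_mk.quasiMeasurePreserving.ae_eq_comp (coeFn_fourierLp 2 n),
    expChar_ae_eq measurableSet_Ico n, ae_restrict_mem (μ := volume) measurableSet_Ico]
    with x h₁ h₂ h₃ h₄
  refine h₁.trans (h₂.trans ?_)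
  rw [h₃, indicator_of_mem h₄, Function.comp_apply, fourier_coe_apply]
  push_cast
  ring_nf

lemma expChar_eq_add_diff {S T : Set ℝ} (hS : MeasurableSet S) (hT : MeasurableSet T)
    (hST : S ⊆ T) (lam : ℝ) : expChar T lam = expChar S lam + expChar (T \ S) lam := by
  rw [← expChar_union hS (hT.diff hS) disjoint_sdiff_right, union_sdiff_cancel hST]

lemma hasRieszUpperBound_expChar {R : Set ℝ} (hR : MeasurableSet R) (hR01 : R ⊆ Ico 0 1)
    {ι : Type*} {ψ : ι → ℤ} (hψ : Function.Injective ψ) :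
    HasRieszUpperBound (fun i => expChar R (ψ i)) 1 := fun c => by
  set X := ∑ i ∈ c.support, c i • expChar R (ψ i)
  set Y := ∑ i ∈ c.support, c i • expChar (Ico 0 1 \ R) (ψ i)
  have hXY : X + Y = ∑ i ∈ c.support, c i • fourierBasisL2 (ψ i) := by
    simp only [X, Y, ← Finset.sum_add_distrib, ← smul_add, fourierBasisL2_apply,
      expChar_eq_add_diff hR measurableSet_Ico hR01]
  have hX : X ∈ L2onSubmodule R := Submodule.sum_mem _ fun i _ =>
    Submodule.smul_mem _ _ (expChar_mem_L2onSubmodule hR _)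
  have hY : Y ∈ L2onSubmodule (Ico 0 1 \ R) := Submodule.sum_mem _ fun i _ =>
    Submodule.smul_mem _ _ (expChar_mem_L2onSubmodule (measurableSet_Ico.diff hR) _)
  have hpyth : ‖X + Y‖ ^ 2 = ‖X‖ ^ 2 + ‖Y‖ ^ 2 := by
    simpa only [sq] using norm_add_sq_eq_norm_sq_add_norm_sq_of_inner_eq_zero _ _
      ((L2onSubmodule_isOrtho disjoint_sdiff_right).inner_eq hX hY)
  have hnorm := (fourierBasisL2.orthonormal.comp ψ hψ).norm_sum_smul_sq c.support c
  rw [Function.comp_def, ← hXY, hpyth] at hnorm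
  nlinarith [sq_nonneg ‖Y‖]

lemma HasRieszUpperBound.expChar_superset {I S : Set ℝ} (hI : MeasurableSet I)
    (hS : MeasurableSet S) (hIS : I ⊆ S) (hS01 : S ⊆ Ico 0 1) {ι : Type*} {ψ : ι → ℤ}
    (hψ : Function.Injective ψ) {B : ℝ} (h : HasRieszUpperBound (fun i => expChar I (ψ i)) B) :
    HasRieszUpperBound (fun i => expChar S (ψ i)) (2 * (B + 1)) := by
  have hsplit : (fun i => expChar S (ψ i)) =
      (fun i => expChar I (ψ i)) + fun i => expChar (S \ I) (ψ i) :=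
    funext fun i => expChar_eq_add_diff hI hS hIS _
  rw [hsplit]
  exact h.add (hasRieszUpperBound_expChar (hS.diff hI) (sdiff_subset.trans hS01) hψ)

open Function in
lemma isRieszBasis_univ_of_triangular {I S : Fin 2 → Set ℝ} {Λ : Fin 2 → Set ℤ}
    (hI : ∀ k, MeasurableSet (I k)) (hIdisj : Pairwise (Disjoint on I))
    (hIcover : ⋃ k, I k = Ico 0 1)
    (hRB : ∀ k, IsRieszBasis (fun l : Λ k => expChar (I k) ((l : ℤ) : ℝ)) (L2on (I k)))
    (hS : ∀ k, MeasurableSet (S k)) (hIS : ∀ k, I k ⊆ S k) (hS01 : ∀ k, S k ⊆ Ico 0 1)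
    {j : Fin 2} (hSj : S j = I j) :
    IsRieszBasis (fun p : Σ k, Λ k => expChar (S p.1) ((p.2 : ℤ) : ℝ)) univ := by
  obtain ⟨o, hjo⟩ : ∃ o, j ≠ o := ⟨j + 1, by omega⟩
  have hcover : Ico 0 1 ⊆ I j ∪ I o := fun x hx => by
    obtain ⟨k, hk⟩ := mem_iUnion.mp (hIcover ▸ hx)
    obtain rfl | rfl : k = j ∨ k = o := by omega
    exacts [.inl hk, .inr hk]
  choose A B hA hB hlow hup using fun k => (hRB k).1.exists_bounds
  have hRj : S o \ I o ⊆ I j := fun x ⟨hxS, hxo⟩ => ((hcover (hS01 o hxS)).resolve_right hxo)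
  have hR : MeasurableSet (S o \ I o) := (hS o).diff (hI o)
  have hfo : ∀ l : Λ o, expChar (S o) ((l : ℤ) : ℝ) =
      expChar (I o) ((l : ℤ) : ℝ) + expChar (S o \ I o) ((l : ℤ) : ℝ) := fun l =>
    expChar_eq_add_diff (hI o) (hS o) (hIS o) _
  have hw : ∀ l : Λ o, expChar (S o \ I o) ((l : ℤ) : ℝ) ∈ L2onSubmodule (I j) := fun l =>
    L2onSubmodule_mono hRj (expChar_mem_L2onSubmodule hR _)
  have hK : 0 < (1 / A o + 2 * (1 + 1 / A o) / A j)⁻¹ := by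
    have := hA j; have := hA o; positivity
  refine ⟨.of_bounds (B := ∑ k, 2 * (B k + 1)) hK ?_ ?_, ?_⟩
  · refine HasRieszLowerBound.sigma_of_triangular hjo (L2onSubmodule_isOrtho (hIdisj hjo))
      (hA j) (hA o) (fun l => ?_) ?_ hfo (fun l => expChar_mem_L2onSubmodule (hI o) _) hw (hlow o)
      (hasRieszUpperBound_expChar hR (sdiff_subset.trans (hS01 o)) Subtype.val_injective)
    · simpa only [hSj] using expChar_mem_L2onSubmodule (hI j) _
    · simpa only [hSj] using hlow j
  · exact HasRieszUpperBound.sigma (fun k => by linarith [hB k]) fun k =>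
      (hup k).expChar_superset (hI k) (hS k) (hIS k) (hS01 k) (ψ := Subtype.val)
        Subtype.val_injective
  · have hj : (Submodule.span ℂ (range fun l : Λ j =>
        expChar (S j) ((l : ℤ) : ℝ))).topologicalClosure = L2onSubmodule (I j) := by
      simpa only [hSj] using (hRB j).topologicalClosure_span_eq
    rw [← Submodule.topologicalClosure_coe,
      Submodule.topologicalClosure_span_sigma_eq_top_of_triangular
        (f := fun p : Σ k, Λ k => expChar (S p.1) ((p.2 : ℤ) : ℝ))
        (L2onSubmodule_sup_eq_top (hI j) (hI o) (hIdisj hjo) hcover) hj hfo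
        (hRB o).topologicalClosure_span_eq hw,
      Submodule.top_coe]

theorem stmt_11_general (I : Fin 2 → Set ℝ) (hI : ∀ k, (I k).OrdConnected)
    (hIdisj : ∀ j k, j ≠ k → Disjoint (I j) (I k))
    (hIcover : (⋃ k, I k) = Set.Ico (0 : ℝ) 1)
    (Λ : Fin 2 → Set ℤ)
    (hΛdisj : ∀ j k, j ≠ k → Disjoint (Λ j) (Λ k))
    (hΛcover : (⋃ k, Λ k) = Set.univ)
    (hRB : ∀ k, IsRieszBasis (fun l : Λ k => expChar (I k) ((l : ℤ) : ℝ)) (L2on (I k)))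
    (𝓛 : Fin 2 → Finset (Fin 2)) (h𝓛 : ∀ k, k ∈ 𝓛 k) :
    IsRieszBasis
      (fun p : Σ k : Fin 2, Λ k => expChar (⋃ n ∈ 𝓛 p.1, I n) ((p.2 : ℤ) : ℝ))
      Set.univ := by
  have hImeas : ∀ k, MeasurableSet (I k) := fun k => (hI k).measurableSet
  obtain ⟨j, hj⟩ | hsingle := em (∃ j, 𝓛 j = {j})
  · exact isRieszBasis_univ_of_triangular (S := fun k => ⋃ n ∈ 𝓛 k, I n) hImeas hIdisj hIcover
      hRB (fun k => Finset.measurableSet_biUnion _ fun n _ => hImeas n)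
      (fun k => subset_iUnion₂ (s := fun n _ => I n) k (h𝓛 k))
      (fun k => hIcover ▸ iUnion₂_subset fun n _ => subset_iUnion I n) (j := j) (by simp [hj])
  · have hfin : ∀ (k : Fin 2) (s : Finset (Fin 2)), k ∈ s → s ≠ {k} → s = Finset.univ := by
      decide
    have hfull : ∀ k, ⋃ n ∈ 𝓛 k, I n = Ico 0 1 := fun k => by
      simp [hfin k (𝓛 k) (h𝓛 k) (not_exists.mp hsingle k), hIcover]
    have hψ : Function.Bijective fun p : Σ k, Λ k => (p.2 : ℤ) :=
      ⟨Subtype.val_injective.comp (sigmaToiUnion_injective Λ hΛdisj), fun n => by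
        obtain ⟨k, hk⟩ := mem_iUnion.mp (hΛcover ▸ mem_univ n)
        exact ⟨⟨k, n, hk⟩, rfl⟩⟩
    simp_rw [hfull, ← fourierBasisL2_apply]
    exact fourierBasisL2.isRieszBasis_comp hψ

/-- Let `I_1, I_2` be nonempty intervals partitioning `[0,1)`, and
`Λ_1, Λ_2` disjoint subsets of `ℤ` with `Λ_1 ∪ Λ_2 = ℤ` such that `E(I_k, Λ_k)` is a
Riesz basis for `L²(I_k)` for `k = 1,2`. For each `k` let `𝓛_k ⊆ {1,2}` with `k ∈ 𝓛_k`
and `S_k = ⋃_{n ∈ 𝓛_k} I_n`. Then `E(S_1, Λ_1) ∪ E(S_2, Λ_2)` is a Riesz basis for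
`L²[0,1)`. -/
theorem stmt_11 (I : Fin 2 → Set ℝ) (hI : ∀ k, (I k).OrdConnected)
    (hne : ∀ k, (I k).Nonempty)
    (hIdisj : ∀ j k, j ≠ k → Disjoint (I j) (I k))
    (hIcover : (⋃ k, I k) = Set.Ico (0 : ℝ) 1)
    (Λ : Fin 2 → Set ℤ)
    (hΛdisj : ∀ j k, j ≠ k → Disjoint (Λ j) (Λ k))
    (hΛcover : (⋃ k, Λ k) = Set.univ)
    (hRB : ∀ k, IsRieszBasis (fun l : Λ k => expChar (I k) ((l : ℤ) : ℝ)) (L2on (I k)))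
    (𝓛 : Fin 2 → Finset (Fin 2)) (h𝓛 : ∀ k, k ∈ 𝓛 k) :
    IsRieszBasis
      (fun p : Σ k : Fin 2, Λ k => expChar (⋃ n ∈ 𝓛 p.1, I n) ((p.2 : ℤ) : ℝ))
      Set.univ :=
  stmt_11_general I hI hIdisj hIcover Λ hΛdisj hΛcover hRB 𝓛 h𝓛
end
end

section
/- Let I_1, I_2, I_3 be nonempty intervals partitioning [0,1), and let Λ_1, Λ_2, Λ_3 be a partition of ℤ such that for each k the system E(I_k, Λ_k) is a Riesz sequence in L²(I_k) with lower Riesz bound α_k > 0. For each k let 𝓛_k ⊆ {1,2,3} with k ∈ 𝓛_k, set S_k = ⋃_{n∈𝓛_k} I_n, and suppose that the complements {1,2,3}∖𝓛_1, {1,2,3}∖𝓛_2, {1,2,3}∖𝓛_3 are pairwise disjoint. Then for every c = (c_n)_{n∈ℤ} ∈ ℓ²(ℤ), ‖ ∑_{k=1}^3 ∑_{λ∈Λ_k} c_λ e^{2πiλ(·)} χ_{[0,1)∖S_k} ‖²_{L²[0,1)} ≤ (1 − min{α_1, α_2, α_3}) · ‖c‖²_{ℓ²}. -/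
/-!
Split a finite partial sum along the blocks `Λ_k`. The block `k` is
`χ_{T_k} p_k` for a trigonometric polynomial `p_k` with coefficients `c|Λ_k`, where
`T_k = [0,1) \ S_k`. Every point of `[0,1)` lies in some `I_m`, and `m ∉ 𝓛_j` for at most
one `j`, so the `T_k` are pairwise disjoint and the squared norms of the blocks add up. Since
`I_k ⊆ S_k` is disjoint from `T_k`, Parseval gives
`∫_{T_k} |p_k|² ≤ ‖c|Λ_k‖² - ∫_{I_k} |p_k|² ≤ (1 - α_k) ‖c|Λ_k‖²`, the last step being the
lower Riesz bound. The estimate passes to the limit of the partial sums.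
-/

open MeasureTheory Complex Real Set
open scoped Classical

noncomputable section

open Function
open scoped ComplexInnerProductSpace ComplexConjugate

theorem norm_sq_sum_indicator_of_pairwise_disjoint {α ι E : Type*} [SeminormedAddCommGroup E]
    {T : ι → Set α} (hT : Pairwise (Disjoint on T)) (s : Finset ι) (f : ι → α → E) (x : α) :
    ‖∑ k ∈ s, (T k).indicator (f k) x‖ ^ 2 = ∑ k ∈ s, ‖(T k).indicator (f k) x‖ ^ 2 := by
  by_cases hx : ∃ j ∈ s, x ∈ T j
  · obtain ⟨j, hj, hxj⟩ := hx
    have hzero : ∀ k ∈ s, k ≠ j → (T k).indicator (f k) x = 0 := fun k _ hkj =>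
      indicator_of_notMem (fun hxk => (hT hkj).ne_of_mem hxk hxj rfl) _
    rw [Finset.sum_eq_single_of_mem j hj hzero,
      Finset.sum_eq_single_of_mem j hj fun k hk hkj => by simp [hzero k hk hkj]]
  · simp only [not_exists, not_and] at hx
    have hzero : ∀ k ∈ s, (T k).indicator (f k) x = 0 := fun k hk =>
      indicator_of_notMem (hx k hk) _
    rw [Finset.sum_eq_zero hzero, Finset.sum_eq_zero fun k hk => by simp [hzero k hk]]
    simp

theorem pairwise_disjoint_sdiff_biUnion {α ι κ : Type*} [Fintype ι] [DecidableEq ι]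
    {I : ι → Set α} {U : Set α} (hU : ⋃ i, I i = U) {L : κ → Finset ι}
    (hL : Pairwise (Disjoint on fun k => (L k)ᶜ)) :
    Pairwise (Disjoint on fun k => U \ ⋃ i ∈ L k, I i) := by
  intro j k hjk
  rw [Function.onFun, Set.disjoint_left]
  rintro x ⟨hxU, hxj⟩ ⟨-, hxk⟩
  obtain ⟨i, hi⟩ := mem_iUnion.1 (hU ▸ hxU)
  exact Finset.disjoint_left.1 (hL hjk)
    (Finset.mem_compl.2 fun h => hxj (mem_iUnion₂.2 ⟨i, h, hi⟩))
    (Finset.mem_compl.2 fun h => hxk (mem_iUnion₂.2 ⟨i, h, hi⟩))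

theorem Finsupp.sum_subtypeDomain_indicator {ι N M : Type*} [Zero N] [AddCommMonoid M]
    {Λ : Set ι} {F : Finset ι} (hF : ↑F ⊆ Λ) (c : ι → N) {g : ι → N → M}
    (hg : ∀ n, g n 0 = 0) :
    ((Finsupp.indicator F fun n _ => c n).subtypeDomain (· ∈ Λ)).sum (fun i a => g i a) =
      ∑ n ∈ F, g n (c n) := by
  rw [Finsupp.sum_subtypeDomain_index fun n hn => hF (Finsupp.support_indicator_subset _ _ hn),
    Finsupp.sum_of_support_subset _ (Finsupp.support_indicator_subset _ _) _ fun n _ => hg n]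
  exact Finset.sum_congr rfl fun n hn => by rw [Finsupp.indicator_of_mem hn]

theorem lower_bound_finset_of_finsupp {ι E : Type*} [SeminormedAddCommGroup E] [Module ℂ E]
    {Λ : Set ι} {v : ι → E} {A : ℝ}
    (h : ∀ c : Λ →₀ ℂ, A * ∑ i ∈ c.support, ‖c i‖ ^ 2 ≤ ‖∑ i ∈ c.support, c i • v i‖ ^ 2)
    {F : Finset ι} (hF : ↑F ⊆ Λ) (c : ι → ℂ) :
    A * ∑ n ∈ F, ‖c n‖ ^ 2 ≤ ‖∑ n ∈ F, c n • v n‖ ^ 2 := by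
  convert h ((Finsupp.indicator F fun n _ => c n).subtypeDomain (· ∈ Λ)) using 3
  · exact (Finsupp.sum_subtypeDomain_indicator hF c (g := fun _ a => ‖a‖ ^ 2) (by simp)).symm
  · exact (Finsupp.sum_subtypeDomain_indicator hF c (g := fun n a => a • v n) (by simp)).symm

theorem norm_sq_le_of_hasSum {ι E : Type*} [SeminormedAddCommGroup E] {v : ι → E} {g : E}
    (hg : HasSum v g) {w : ι → ℝ} (hw : Summable w) {C : ℝ}
    (h : ∀ F : Finset ι, ‖∑ i ∈ F, v i‖ ^ 2 ≤ C * ∑ i ∈ F, w i) : ‖g‖ ^ 2 ≤ C * ∑' i, w i :=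
  le_of_tendsto_of_tendsto' (hg.norm.pow 2) (hw.hasSum.const_mul C) h

theorem intervalIntegral_exp_two_pi_int_mul_I (k : ℤ) :
    ∫ x in (0:ℝ)..1, Complex.exp (2 * π * (k : ℝ) * x * I) = if k = 0 then 1 else 0 := by
  split_ifs with hk
  · simp [hk]
  have hc : (2 * π * (k : ℝ) * I : ℂ) ≠ 0 := by simp [hk, Real.pi_ne_zero]
  have hexp : Complex.exp (2 * π * k * I) = 1 := by
    simpa [mul_comm, mul_left_comm, mul_assoc] using Complex.exp_int_mul_two_pi_mul_I k
  simp_rw [show ∀ x : ℝ, (2 * π * (k : ℝ) * x * I : ℂ) = 2 * π * (k : ℝ) * I * x from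
    fun x => by ring]
  rw [integral_exp_mul_complex hc]
  simp [hexp]

instance inst_s12 : IsFiniteMeasure μ01 := by
  rw [μ01]; infer_instance

theorem toL2_eq {f : ℝ → ℂ} (hf : MemLp f 2 μ01) : toL2 f = hf.toLp f := dif_pos hf

theorem toL2_sum {ι : Type*} (s : Finset ι) {f : ι → ℝ → ℂ} (hf : ∀ i ∈ s, MemLp (f i) 2 μ01) :
    toL2 (∑ i ∈ s, f i) = ∑ i ∈ s, toL2 (f i) := by
  induction s using Finset.cons_induction with
  | empty => simp [toL2_eq MemLp.zero]
  | cons i s hi ih =>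
    rw [Finset.forall_mem_cons] at hf
    have hs := memLp_finsetSum' s hf.2
    rw [Finset.sum_cons, Finset.sum_cons, ← ih hf.2, toL2_eq hf.1, toL2_eq hs,
      toL2_eq (hf.1.add hs), MemLp.toLp_add]

theorem toL2_const_smul (a : ℂ) {f : ℝ → ℂ} (hf : MemLp f 2 μ01) :
    toL2 (a • f) = a • toL2 f := by
  rw [toL2_eq hf, toL2_eq (hf.const_smul a), MemLp.toLp_const_smul]

theorem inner_toL2 {f g : ℝ → ℂ} (hf : MemLp f 2 μ01) (hg : MemLp g 2 μ01) :
    ⟪toL2 f, toL2 g⟫ = ∫ x, conj (f x) * g x ∂μ01 := by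
  rw [toL2_eq hf, toL2_eq hg, L2.inner_def]
  refine integral_congr_ae ?_
  filter_upwards [hf.coeFn_toLp, hg.coeFn_toLp] with x hfx hgx
  rw [hfx, hgx, RCLike.inner_apply, mul_comm]

theorem norm_toL2_sq {f : ℝ → ℂ} (hf : MemLp f 2 μ01) :
    ‖toL2 f‖ ^ 2 = ∫ x, ‖f x‖ ^ 2 ∂μ01 := by
  have h := inner_self_eq_norm_sq_to_K (𝕜 := ℂ) (toL2 f)
  simp_rw [inner_toL2 hf hf, Complex.conj_mul'] at h
  norm_cast at h
  exact Complex.ofReal_injective h.symm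

theorem memLp_exp (lam : ℝ) :
    MemLp (fun x : ℝ => Complex.exp (2 * π * lam * x * I)) 2 μ01 := by
  refine MemLp.of_bound (by fun_prop : Continuous _).aestronglyMeasurable 1
    (.of_forall fun x => ?_)
  rw [show (2 * π * lam * x * I : ℂ) = ((2 * π * lam * x : ℝ) : ℂ) * I by push_cast; ring,
    Complex.norm_exp_ofReal_mul_I]

def trigPoly (c : ℤ → ℂ) (F : Finset ℤ) (x : ℝ) : ℂ :=
  ∑ n ∈ F, c n * Complex.exp (2 * π * (n : ℝ) * x * I)

theorem memLp_trigPoly (c : ℤ → ℂ) (F : Finset ℤ) : MemLp (trigPoly c F) 2 μ01 :=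
  memLp_finsetSum F fun n _ => (memLp_exp n).const_mul (c n)

theorem sum_smul_expChar {S : Set ℝ} (hS : MeasurableSet S) (c : ℤ → ℂ) (F : Finset ℤ) :
    ∑ n ∈ F, c n • expChar S n = toL2 (S.indicator (trigPoly c F)) := by
  have hmem (n : ℤ) :
      MemLp (S.indicator fun x : ℝ => Complex.exp (2 * π * (n : ℝ) * x * I)) 2 μ01 :=
    (memLp_exp n).indicator hS
  simp_rw [expChar, ← toL2_const_smul _ (hmem _)]
  rw [← toL2_sum F fun n _ => (hmem n).const_smul (c n)]
  congr 1
  ext x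
  by_cases hx : x ∈ S <;> simp [hx, trigPoly]

theorem norm_sq_sum_smul_expChar {S : Set ℝ} (hS : MeasurableSet S) (c : ℤ → ℂ)
    (F : Finset ℤ) :
    ‖∑ n ∈ F, c n • expChar S n‖ ^ 2 = ∫ x in S, ‖trigPoly c F x‖ ^ 2 ∂μ01 := by
  rw [sum_smul_expChar hS, norm_toL2_sq ((memLp_trigPoly c F).indicator hS),
    ← integral_indicator hS]
  congr 1
  ext x
  by_cases hx : x ∈ S <;> simp [hx]

theorem expChar_univ (lam : ℝ) :
    expChar univ lam = toL2 fun x => Complex.exp (2 * π * lam * x * I) := by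
  rw [expChar, Set.indicator_univ]

theorem orthonormal_expChar_univ : Orthonormal ℂ fun n : ℤ => expChar univ n := by
  rw [orthonormal_iff_ite]
  intro m n
  have hprod (x : ℝ) :
      conj (Complex.exp (2 * π * (m : ℝ) * x * I)) * Complex.exp (2 * π * (n : ℝ) * x * I) =
        Complex.exp (2 * π * ((n - m : ℤ) : ℝ) * x * I) := by
    rw [← Complex.exp_conj, ← Complex.exp_add]
    congr 1
    simp only [map_mul, Complex.conj_I, Complex.conj_ofReal, map_ofNat]
    push_cast
    ring
  rw [expChar_univ, expChar_univ, inner_toL2 (memLp_exp m) (memLp_exp n)]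
  simp_rw [hprod]
  rw [μ01, integral_Ico_eq_integral_Ioo, ← integral_Ioc_eq_integral_Ioo,
    ← intervalIntegral.integral_of_le zero_le_one, intervalIntegral_exp_two_pi_int_mul_I]
  simp [sub_eq_zero, eq_comm]

theorem norm_sq_sum_smul_expChar_univ (c : ℤ → ℂ) (F : Finset ℤ) :
    ‖∑ n ∈ F, c n • expChar univ n‖ ^ 2 = ∑ n ∈ F, ‖c n‖ ^ 2 :=
  orthonormal_expChar_univ.orthogonalFamily.norm_sum c F

theorem norm_sq_sum_smul_expChar_add_le {S T : Set ℝ} (hS : MeasurableSet S)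
    (hT : MeasurableSet T) (hST : Disjoint S T) (c : ℤ → ℂ) (F : Finset ℤ) :
    ‖∑ n ∈ F, c n • expChar S n‖ ^ 2 + ‖∑ n ∈ F, c n • expChar T n‖ ^ 2 ≤
      ∑ n ∈ F, ‖c n‖ ^ 2 := by
  have hint : Integrable (fun x => ‖trigPoly c F x‖ ^ 2) μ01 :=
    (memLp_trigPoly c F).norm.integrable_sq
  rw [norm_sq_sum_smul_expChar hS, norm_sq_sum_smul_expChar hT,
    ← setIntegral_union hST hT hint.integrableOn hint.integrableOn,
    ← norm_sq_sum_smul_expChar_univ, norm_sq_sum_smul_expChar MeasurableSet.univ,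
    Measure.restrict_univ]
  exact setIntegral_le_integral hint (.of_forall fun _ => by positivity)

theorem norm_sq_sum_sum_smul_expChar {ι : Type*} {T : ι → Set ℝ}
    (hT : ∀ k, MeasurableSet (T k)) (hTd : Pairwise (Disjoint on T)) (s : Finset ι)
    (c : ℤ → ℂ) (G : ι → Finset ℤ) :
    ‖∑ k ∈ s, ∑ n ∈ G k, c n • expChar (T k) n‖ ^ 2 =
      ∑ k ∈ s, ‖∑ n ∈ G k, c n • expChar (T k) n‖ ^ 2 := by
  have hmem k : MemLp ((T k).indicator (trigPoly c (G k))) 2 μ01 :=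
    (memLp_trigPoly c (G k)).indicator (hT k)
  simp_rw [sum_smul_expChar (hT _), norm_toL2_sq (hmem _)]
  rw [← toL2_sum s fun k _ => hmem k, norm_toL2_sq (memLp_finsetSum' s fun k _ => hmem k),
    ← integral_finsetSum s fun k _ => (hmem k).norm.integrable_sq]
  simp_rw [Finset.sum_apply]
  exact integral_congr_ae
    (.of_forall fun x => norm_sq_sum_indicator_of_pairwise_disjoint hTd s _ x)

theorem norm_sq_sum_smul_expChar_le {ι : Type*} [Fintype ι] {T I : ι → Set ℝ}
    (hT : ∀ k, MeasurableSet (T k)) (hTd : Pairwise (Disjoint on T))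
    (hI : ∀ k, MeasurableSet (I k)) (hIT : ∀ k, Disjoint (I k) (T k))
    {Λ : ι → Set ℤ} {α : ι → ℝ}
    (hα : ∀ k, ∀ c : Λ k →₀ ℂ, α k * ∑ i ∈ c.support, ‖c i‖ ^ 2 ≤
      ‖∑ i ∈ c.support, c i • expChar (I k) ((i : ℤ) : ℝ)‖ ^ 2)
    {κ : ℤ → ι} (hκ : ∀ n, n ∈ Λ (κ n)) (c : ℤ → ℂ) (F : Finset ℤ) :
    ‖∑ n ∈ F, c n • expChar (T (κ n)) n‖ ^ 2 ≤ ∑ n ∈ F, (1 - α (κ n)) * ‖c n‖ ^ 2 := by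
  have hfiber k : ↑(F.filter (κ · = k)) ⊆ Λ k := fun n hn => (Finset.mem_filter.1 hn).2 ▸ hκ n
  calc ‖∑ n ∈ F, c n • expChar (T (κ n)) n‖ ^ 2
      = ‖∑ k, ∑ n ∈ F with κ n = k, c n • expChar (T k) n‖ ^ 2 := by
        rw [← Finset.sum_fiberwise F κ fun n => c n • expChar (T (κ n)) n]
        refine congrArg (‖·‖ ^ 2) (Finset.sum_congr rfl fun k _ =>
          Finset.sum_congr rfl fun n hn => ?_)
        rw [(Finset.mem_filter.1 hn).2]
    _ = ∑ k, ‖∑ n ∈ F with κ n = k, c n • expChar (T k) n‖ ^ 2 :=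
        norm_sq_sum_sum_smul_expChar hT hTd _ c _
    _ ≤ ∑ k, (1 - α k) * ∑ n ∈ F with κ n = k, ‖c n‖ ^ 2 := Finset.sum_le_sum fun k _ => by
        have hbessel :=
          norm_sq_sum_smul_expChar_add_le (hI k) (hT k) (hIT k) c (F.filter (κ · = k))
        have hriesz := lower_bound_finset_of_finsupp (v := fun n : ℤ => expChar (I k) n) (hα k)
          (hfiber k) c
        linarith
    _ = ∑ n ∈ F, (1 - α (κ n)) * ‖c n‖ ^ 2 := by
        rw [← Finset.sum_fiberwise F κ fun n => (1 - α (κ n)) * ‖c n‖ ^ 2]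
        refine Finset.sum_congr rfl fun k _ => ?_
        rw [Finset.mul_sum]
        exact Finset.sum_congr rfl fun n hn => by rw [(Finset.mem_filter.1 hn).2]

theorem stmt_12_general (I : Fin 3 → Set ℝ) (hI : ∀ k, (I k).OrdConnected)
    (hIcover : (⋃ k, I k) = Set.Ico (0 : ℝ) 1)
    (Λ : Fin 3 → Set ℤ)
    (α : Fin 3 → ℝ)
    (hRS : ∀ k, ∃ B : ℝ, α k ≤ B ∧ ∀ c : Λ k →₀ ℂ,
      (α k * ∑ i ∈ c.support, ‖c i‖ ^ 2 ≤
        ‖∑ i ∈ c.support, c i • expChar (I k) (((i : ℤ) : ℝ))‖ ^ 2) ∧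
      ‖∑ i ∈ c.support, c i • expChar (I k) (((i : ℤ) : ℝ))‖ ^ 2 ≤
        B * ∑ i ∈ c.support, ‖c i‖ ^ 2)
    (𝓛 : Fin 3 → Finset (Fin 3)) (h𝓛 : ∀ k, k ∈ 𝓛 k)
    (hcompl : ∀ j k, j ≠ k → Disjoint ((𝓛 j)ᶜ) ((𝓛 k)ᶜ))
    (κ : ℤ → Fin 3) (hκ : ∀ n, n ∈ Λ (κ n)) :
    ∀ c : ℤ → ℂ, Summable (fun n => ‖c n‖ ^ 2) →
      ∀ g : L2,
        HasSum (fun n : ℤ =>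
          c n • expChar (Set.Ico (0 : ℝ) 1 \ ⋃ m ∈ 𝓛 (κ n), I m) ((n : ℤ) : ℝ)) g →
        ‖g‖ ^ 2 ≤ (1 - min (α 0) (min (α 1) (α 2))) * ∑' n : ℤ, ‖c n‖ ^ 2 := by
  intro c hc g hg
  have hImeas k : MeasurableSet (I k) := (hI k).measurableSet
  have hT k : MeasurableSet (Ico (0 : ℝ) 1 \ ⋃ m ∈ 𝓛 k, I m) :=
    measurableSet_Ico.diff (Finset.measurableSet_biUnion _ fun m _ => hImeas m)
  have hIT k : Disjoint (I k) (Ico (0 : ℝ) 1 \ ⋃ m ∈ 𝓛 k, I m) :=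
    disjoint_sdiff_right.mono_left (subset_biUnion_of_mem (u := I) (h𝓛 k))
  have hmin k : min (α 0) (min (α 1) (α 2)) ≤ α k := by fin_cases k <;> simp
  refine norm_sq_le_of_hasSum hg hc fun F => (norm_sq_sum_smul_expChar_le hT
    (pairwise_disjoint_sdiff_biUnion hIcover fun j k => hcompl j k) hImeas hIT
    (fun k c => ((hRS k).choose_spec.2 c).1) hκ c F).trans ?_
  rw [Finset.mul_sum]
  exact Finset.sum_le_sum fun n _ =>
    mul_le_mul_of_nonneg_right (by linarith [hmin (κ n)]) (by positivity)

/-- Let `I_1, I_2, I_3` be nonempty intervals partitioning `[0,1)` and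
`Λ_1, Λ_2, Λ_3` a partition of `ℤ` such that each `E(I_k, Λ_k)` is a Riesz sequence in
`L²(I_k)` with lower Riesz bound `α_k > 0`. For each `k` let `𝓛_k ⊆ {1,2,3}` with
`k ∈ 𝓛_k`, `S_k = ⋃_{n ∈ 𝓛_k} I_n`, and assume the complements `{1,2,3}∖𝓛_k` are
pairwise disjoint. Then for every `c ∈ ℓ²(ℤ)`,
`‖∑_k ∑_{λ∈Λ_k} c_λ e^{2πiλ(·)} χ_{[0,1)∖S_k}‖² ≤ (1 − min{α_1,α_2,α_3})·‖c‖²`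
(here `κ : ℤ → {1,2,3}` assigns to each `n ∈ ℤ` the index `k` with `n ∈ Λ_k`, and the sum
is any `L²`-limit `g` of the series). -/
theorem stmt_12 (I : Fin 3 → Set ℝ) (hI : ∀ k, (I k).OrdConnected)
    (hne : ∀ k, (I k).Nonempty)
    (hIdisj : ∀ j k, j ≠ k → Disjoint (I j) (I k))
    (hIcover : (⋃ k, I k) = Set.Ico (0 : ℝ) 1)
    (Λ : Fin 3 → Set ℤ)
    (hΛdisj : ∀ j k, j ≠ k → Disjoint (Λ j) (Λ k))
    (hΛcover : (⋃ k, Λ k) = Set.univ)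
    (α : Fin 3 → ℝ) (hα : ∀ k, 0 < α k)
    (hRS : ∀ k, ∃ B : ℝ, α k ≤ B ∧ ∀ c : Λ k →₀ ℂ,
      (α k * ∑ i ∈ c.support, ‖c i‖ ^ 2 ≤
        ‖∑ i ∈ c.support, c i • expChar (I k) (((i : ℤ) : ℝ))‖ ^ 2) ∧
      ‖∑ i ∈ c.support, c i • expChar (I k) (((i : ℤ) : ℝ))‖ ^ 2 ≤
        B * ∑ i ∈ c.support, ‖c i‖ ^ 2)
    (𝓛 : Fin 3 → Finset (Fin 3)) (h𝓛 : ∀ k, k ∈ 𝓛 k)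
    (hcompl : ∀ j k, j ≠ k → Disjoint ((𝓛 j)ᶜ) ((𝓛 k)ᶜ))
    (κ : ℤ → Fin 3) (hκ : ∀ n, n ∈ Λ (κ n)) :
    ∀ c : ℤ → ℂ, Summable (fun n => ‖c n‖ ^ 2) →
      ∀ g : L2,
        HasSum (fun n : ℤ =>
          c n • expChar (Set.Ico (0 : ℝ) 1 \ ⋃ m ∈ 𝓛 (κ n), I m) ((n : ℤ) : ℝ)) g →
        ‖g‖ ^ 2 ≤ (1 - min (α 0) (min (α 1) (α 2))) * ∑' n : ℤ, ‖c n‖ ^ 2 :=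
  stmt_12_general I hI hIcover Λ α hRS 𝓛 h𝓛 hcompl κ hκ
end
end
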